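/- arXiv:1507.01735 — 2 statements merged into one kernel-verified Lean document; each statement's English description precedes it below -/
import Mathlib

section
/- Let Γ₁ and Γ₂ be groups, φ : Γ₁ → Γ₂ a group homomorphism, E₁ a Γ₁-set, and E₂ and V two Γ₂-sets, and let κ : E₁ → E₂ satisfy κ(γ•z) = φ(γ)•κ(z) for all γ ∈ Γ₁, z ∈ E₁. Assume moreover that: (i) the action of Γ₂ on E₂ is free; (ii) whenever κ(z₂) lies in the Γ₂-orbit of κ(z₁) (for z₁, z₂ ∈ E₁), z₂ lies in the Γ₁-orbit of z₁; and (iii) every Γ₂-orbit in E₂ contains a point of the range of κ. Let Γ₁ act on E₁ × V by γ•(z, v) = (γ•z, φ(γ)•v) and Γ₂ act on E₂ × V diagonally. Then the induced map Ψ : (E₁ × V)/Γ₁ → (E₂ × V)/Γ₂, [ (z, v) ] ↦ [ (κ(z), v) ], is a bijection. -/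
/-- The equivalence relation on `E₁ × V` generated by the action
`γ • (z, v) = (γ • z, φ γ • v)` of `Γ₁` (orbit equivalence). -/
def twistedOrbitRel {Γ₁ Γ₂ : Type*} [Group Γ₁] [Group Γ₂] (φ : Γ₁ →* Γ₂)
    (E₁ V : Type*) [MulAction Γ₁ E₁] [MulAction Γ₂ V] : Setoid (E₁ × V) where
  r p q := ∃ γ : Γ₁, q.1 = γ • p.1 ∧ q.2 = φ γ • p.2
  iseqv := by
    constructor
    · intro p; exact ⟨1, by simp⟩
    · rintro p q ⟨γ, h1, h2⟩
      exact ⟨γ⁻¹, by simp [h1, h2]⟩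
    · rintro p q r ⟨γ, h1, h2⟩ ⟨δ, h3, h4⟩
      exact ⟨δ * γ, by simp [h1, h2, h3, h4, mul_smul]⟩

/-- The orbit equivalence relation on `E₂ × V` for the diagonal action of `Γ₂`. -/
def diagOrbitRel (Γ₂ E₂ V : Type*) [Group Γ₂] [MulAction Γ₂ E₂] [MulAction Γ₂ V] :
    Setoid (E₂ × V) where
  r p q := ∃ γ : Γ₂, q.1 = γ • p.1 ∧ q.2 = γ • p.2
  iseqv := by
    constructor
    · intro p; exact ⟨1, by simp⟩
    · rintro p q ⟨γ, h1, h2⟩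
      exact ⟨γ⁻¹, by simp [h1, h2]⟩
    · rintro p q r ⟨γ, h1, h2⟩ ⟨δ, h3, h4⟩
      exact ⟨δ * γ, by simp [h1, h2, h3, h4, mul_smul]⟩

theorem eq_of_smul_eq_smul_of_free {G X : Type*} [Group G] [MulAction G X]
    (hfree : ∀ (g : G) (x : X), g • x = x → g = 1) {g h : G} {x : X} (hgh : g • x = h • x) :
    g = h :=
  inv_mul_eq_one.mp <| hfree _ x <| by rw [mul_smul, ← hgh, inv_smul_smul]

section Descent

variable {Γ₁ Γ₂ E₁ E₂ V : Type*} [Group Γ₁] [Group Γ₂]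
    [MulAction Γ₁ E₁] [MulAction Γ₂ E₂] [MulAction Γ₂ V] {φ : Γ₁ →* Γ₂} {κ : E₁ → E₂}

theorem twistedOrbitRel_of_diagOrbitRel (hκ : ∀ (γ : Γ₁) (z : E₁), κ (γ • z) = φ γ • κ z)
    (hfree : ∀ (γ : Γ₂) (y : E₂), γ • y = y → γ = 1)
    (hfib : ∀ z₁ z₂ : E₁, (∃ γ₂ : Γ₂, κ z₂ = γ₂ • κ z₁) → ∃ γ₁ : Γ₁, z₂ = γ₁ • z₁)
    {z₁ z₂ : E₁} {v₁ v₂ : V} (h : diagOrbitRel Γ₂ E₂ V (κ z₁, v₁) (κ z₂, v₂)) :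
    twistedOrbitRel φ E₁ V (z₁, v₁) (z₂, v₂) := by
  obtain ⟨γ₂, hκz, hv⟩ : ∃ γ₂ : Γ₂, κ z₂ = γ₂ • κ z₁ ∧ v₂ = γ₂ • v₁ := h
  obtain ⟨γ₁, hz⟩ := hfib z₁ z₂ ⟨γ₂, hκz⟩
  -- freeness forces the translating element of `Γ₂` to be the image of the one of `Γ₁`
  have hγ : φ γ₁ = γ₂ :=
    eq_of_smul_eq_smul_of_free hfree <| by rw [← hκ, ← hz, hκz]
  exact ⟨γ₁, hz, hγ ▸ hv⟩

theorem exists_diagOrbitRel_of_orbits_meet_range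
    (hsurj : ∀ y : E₂, ∃ (γ : Γ₂) (z : E₁), y = γ • κ z)
    (y : E₂) (v : V) : ∃ (z : E₁) (w : V), diagOrbitRel Γ₂ E₂ V (κ z, w) (y, v) := by
  obtain ⟨γ, z, hy⟩ := hsurj y
  exact ⟨z, γ⁻¹ • v, γ, hy, (smul_inv_smul γ v).symm⟩

end Descent

/-- With `κ : E₁ → E₂` equivariant along `φ : Γ₁ → Γ₂`, if moreover
(i) the `Γ₂`-action on `E₂` is free, (ii) fibers of `κ` over `Γ₂`-orbits are contained
in `Γ₁`-orbits, and (iii) every `Γ₂`-orbit in `E₂` meets the range of `κ`, then the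
induced map `Ψ : (E₁ × V)/Γ₁ → (E₂ × V)/Γ₂`, `[(z,v)] ↦ [(κ z, v)]`, is a bijection. -/
theorem descend_to_orbit_spaces_bijective {Γ₁ Γ₂ E₁ E₂ V : Type*} [Group Γ₁] [Group Γ₂]
    [MulAction Γ₁ E₁] [MulAction Γ₂ E₂] [MulAction Γ₂ V]
    (φ : Γ₁ →* Γ₂) (κ : E₁ → E₂)
    (hκ : ∀ (γ : Γ₁) (z : E₁), κ (γ • z) = φ γ • κ z)
    (hfree : ∀ (γ : Γ₂) (y : E₂), γ • y = y → γ = 1)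
    (hfib : ∀ z₁ z₂ : E₁, (∃ γ₂ : Γ₂, κ z₂ = γ₂ • κ z₁) → ∃ γ₁ : Γ₁, z₂ = γ₁ • z₁)
    (hsurj : ∀ y : E₂, ∃ (γ : Γ₂) (z : E₁), y = γ • κ z)
    (Ψ : Quotient (twistedOrbitRel φ E₁ V) → Quotient (diagOrbitRel Γ₂ E₂ V))
    (hΨ : ∀ (z : E₁) (v : V),
      Ψ (Quotient.mk (twistedOrbitRel φ E₁ V) (z, v)) =
        Quotient.mk (diagOrbitRel Γ₂ E₂ V) (κ z, v)) :
    Function.Bijective Ψ := by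
  refine ⟨fun a b hab ↦ ?_, fun b ↦ ?_⟩
  · induction a using Quotient.inductionOn with | h p =>
    induction b using Quotient.inductionOn with | h q =>
    rw [hΨ, hΨ] at hab
    exact Quotient.sound (twistedOrbitRel_of_diagOrbitRel hκ hfree hfib (Quotient.exact hab))
  · induction b using Quotient.inductionOn with | h q =>
    obtain ⟨z, w, hzw⟩ := exists_diagOrbitRel_of_orbits_meet_range hsurj q.1 q.2
    exact ⟨Quotient.mk _ (z, w), (hΨ z w).trans (Quotient.sound hzw)⟩
end

section
/- Let A be a unital C*-algebra and let a ∈ A be selfadjoint with spectrum(a) ∩ (−1, 1) = ∅. For t ∈ (0,1] let c_t(a) denote the continuous functional calculus of a applied to x ↦ (i·x/t + 1)/(i·x/t − 1). Then the map g : [0,1] → A defined by g(0) = 1 and g(t) = c_t(a) for t ∈ (0,1] is continuous. -/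
private lemma cayley_den_rw (r t : ℝ) :
    Complex.I * (r : ℂ) / (t : ℂ) - 1 = ((r / t : ℝ) : ℂ) * Complex.I - 1 := by
  push_cast; ring

private lemma cayley_den_ne (r t : ℝ) : Complex.I * (r : ℂ) / (t : ℂ) - 1 ≠ 0 := by
  rw [cayley_den_rw]
  intro h
  have := congrArg Complex.re h
  simp at this

private lemma cayley_den_norm (r t : ℝ) (ht : 0 < t) :
    |r| / t ≤ ‖Complex.I * (r : ℂ) / (t : ℂ) - 1‖ := by
  rw [cayley_den_rw]
  have him : (((r / t : ℝ) : ℂ) * Complex.I - 1).im = r / t := by simp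
  calc |r| / t = |(((r / t : ℝ) : ℂ) * Complex.I - 1).im| := by
        rw [him, abs_div, abs_of_pos ht]
    _ ≤ ‖((r / t : ℝ) : ℂ) * Complex.I - 1‖ := by
        exact Complex.abs_im_le_norm _

private lemma cayley_eq (r t : ℝ) :
    (Complex.I * (r:ℂ) / (t:ℂ) + 1) / (Complex.I * (r:ℂ) / (t:ℂ) - 1)
      = 1 + 2 / (Complex.I * (r:ℂ) / (t:ℂ) - 1) := by
  have hz := cayley_den_ne r t
  field_simp
  ring

private lemma cayley_bound_one (r t : ℝ) (hr : 1 ≤ |r|) (ht : 0 < t) :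
    ‖(Complex.I * (r:ℂ) / (t:ℂ) + 1) / (Complex.I * (r:ℂ) / (t:ℂ) - 1) - 1‖ ≤ 2 * t := by
  rw [cayley_eq]
  have hz := cayley_den_ne r t
  have hzn := cayley_den_norm r t ht
  have hpos : (0:ℝ) < ‖Complex.I * (r:ℂ) / (t:ℂ) - 1‖ := norm_pos_iff.mpr hz
  have h1t : 1 / t ≤ ‖Complex.I * (r:ℂ) / (t:ℂ) - 1‖ :=
    le_trans (div_le_div_of_nonneg_right hr ht.le) hzn
  have : (1 : ℂ) + 2 / (Complex.I * (r:ℂ) / (t:ℂ) - 1) - 1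
      = 2 / (Complex.I * (r:ℂ) / (t:ℂ) - 1) := by ring
  rw [this, norm_div]
  have h2 : ‖(2:ℂ)‖ = 2 := by norm_num
  rw [h2, div_le_iff₀ hpos]
  have h1 : 1 ≤ t * ‖Complex.I * (r:ℂ) / (t:ℂ) - 1‖ := by
    rw [← div_le_iff₀' ht]; exact h1t
  nlinarith

private lemma cayley_bound_two (r t s : ℝ) (hr : 1 ≤ |r|) (ht : 0 < t) (hs : 0 < s) :
    ‖(Complex.I * (r:ℂ) / (t:ℂ) + 1) / (Complex.I * (r:ℂ) / (t:ℂ) - 1)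
      - (Complex.I * (r:ℂ) / (s:ℂ) + 1) / (Complex.I * (r:ℂ) / (s:ℂ) - 1)‖ ≤ 2 * |t - s| := by
  have hzt := cayley_den_ne r t
  have hzs := cayley_den_ne r s
  have hznt := cayley_den_norm r t ht
  have hzns := cayley_den_norm r s hs
  have hpt : (0:ℝ) < ‖Complex.I * (r:ℂ) / (t:ℂ) - 1‖ := norm_pos_iff.mpr hzt
  have hps : (0:ℝ) < ‖Complex.I * (r:ℂ) / (s:ℂ) - 1‖ := norm_pos_iff.mpr hzs
  have htC : (t:ℂ) ≠ 0 := by exact_mod_cast ht.ne'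
  have hsC : (s:ℂ) ≠ 0 := by exact_mod_cast hs.ne'
  have hzt' : Complex.I * (r:ℂ) - (t:ℂ) ≠ 0 := by
    intro h
    apply hzt
    rw [show Complex.I * (r:ℂ) / (t:ℂ) - 1 = (Complex.I * (r:ℂ) - (t:ℂ)) / (t:ℂ) by
      field_simp]
    simp [h]
  have hzs' : Complex.I * (r:ℂ) - (s:ℂ) ≠ 0 := by
    intro h
    apply hzs
    rw [show Complex.I * (r:ℂ) / (s:ℂ) - 1 = (Complex.I * (r:ℂ) - (s:ℂ)) / (s:ℂ) by
      field_simp]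
    simp [h]
  rw [cayley_eq r t, cayley_eq r s]
  have key : (1:ℂ) + 2 / (Complex.I * (r:ℂ) / (t:ℂ) - 1)
      - (1 + 2 / (Complex.I * (r:ℂ) / (s:ℂ) - 1))
      = 2 * Complex.I * (r:ℂ) * ((t:ℂ) - (s:ℂ))
        / ((s:ℂ) * (t:ℂ) * (Complex.I * (r:ℂ) / (t:ℂ) - 1) * (Complex.I * (r:ℂ) / (s:ℂ) - 1)) := by
    field_simp [hzt', hzs']
    ring
  rw [key, norm_div]
  have hnum : ‖2 * Complex.I * (r:ℂ) * ((t:ℂ) - (s:ℂ))‖ = 2 * |r| * |t - s| := by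
    rw [show ((t:ℂ) - (s:ℂ)) = ((t - s : ℝ) : ℂ) by push_cast; ring,
      norm_mul, norm_mul, norm_mul, Complex.norm_I, Complex.norm_real, Complex.norm_real,
      Real.norm_eq_abs, Real.norm_eq_abs]
    norm_num
  have hden : ‖(s:ℂ) * (t:ℂ) * (Complex.I * (r:ℂ) / (t:ℂ) - 1) * (Complex.I * (r:ℂ) / (s:ℂ) - 1)‖
      = s * t * ‖Complex.I * (r:ℂ) / (t:ℂ) - 1‖ * ‖Complex.I * (r:ℂ) / (s:ℂ) - 1‖ := by
    simp [norm_mul, Complex.norm_real, Real.norm_eq_abs, abs_of_pos ht, abs_of_pos hs]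
  rw [hnum, hden]
  set P := ‖Complex.I * (r:ℂ) / (t:ℂ) - 1‖
  set Q := ‖Complex.I * (r:ℂ) / (s:ℂ) - 1‖
  have hrtP : |r| ≤ t * P := by rw [← div_le_iff₀' ht]; exact hznt
  have hrsQ : |r| ≤ s * Q := by rw [← div_le_iff₀' hs]; exact hzns
  rw [div_le_iff₀ (by positivity)]
  have habs : 0 ≤ |t - s| := abs_nonneg _
  nlinarith [mul_le_mul hrtP hrsQ (abs_nonneg r) (by positivity : (0:ℝ) ≤ t * P),
    abs_nonneg r, mul_nonneg habs (abs_nonneg r)]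



/-- Let `A` be a unital C*-algebra, `a ∈ A` selfadjoint with
`spectrum(a) ∩ (-1,1) = ∅`. Then the map `g : [0,1] → A` with `g 0 = 1` and
`g t = c_t(a)` (the continuous functional calculus of `a` applied to
`x ↦ (i x/t + 1)/(i x/t - 1)`) for `t ∈ (0,1]` is continuous. -/
theorem cayley_transform_path_continuous (A : Type*) [CStarAlgebra A]
    (a : A) (ha : IsSelfAdjoint a)
    (hspec : spectrum ℝ a ∩ Set.Ioo (-1 : ℝ) 1 = ∅)
    (g : Set.Icc (0 : ℝ) 1 → A)
    (hg0 : g ⟨0, by norm_num⟩ = 1)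
    (hgt : ∀ (t : ℝ) (ht : t ∈ Set.Ioc (0 : ℝ) 1),
      g ⟨t, Set.Ioc_subset_Icc_self ht⟩ =
        cfc (fun x : ℂ => (Complex.I * x / (t : ℂ) + 1) / (Complex.I * x / (t : ℂ) - 1)) a) :
    Continuous g := by
  have hnormal : IsStarNormal a := ha.isStarNormal
  have hres := ha.spectrumRestricts
  have hspecC : spectrum ℂ a = (fun r : ℝ => (r : ℂ)) '' spectrum ℝ a := by
    rw [← hres.algebraMap_image]
    rfl
  have habs : ∀ r ∈ spectrum ℝ a, 1 ≤ |r| := by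
    intro r hr
    by_contra h
    push_neg at h
    rw [abs_lt] at h
    have : r ∈ spectrum ℝ a ∩ Set.Ioo (-1 : ℝ) 1 := ⟨hr, h.1, h.2⟩
    rw [hspec] at this
    exact this
  have hcont : ∀ t : ℝ,
      ContinuousOn (fun x : ℂ => (Complex.I * x / (t : ℂ) + 1) / (Complex.I * x / (t : ℂ) - 1))
        (spectrum ℂ a) := by
    intro t
    refine ContinuousOn.div (by fun_prop) (by fun_prop) ?_
    intro x hx
    rw [hspecC] at hx
    obtain ⟨r, -, rfl⟩ := hx
    exact cayley_den_ne r t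
  -- bound near zero
  have hone : ∀ t : ℝ, ∀ ht : t ∈ Set.Ioc (0 : ℝ) 1,
      ‖g ⟨t, Set.Ioc_subset_Icc_self ht⟩ - 1‖ ≤ 2 * t := by
    intro t ht
    rw [hgt t ht, ← cfc_const_one ℂ a,
      ← cfc_sub _ _ a (hcont t) (by fun_prop)]
    refine norm_cfc_le (by linarith [ht.1]) fun x hx => ?_
    rw [hspecC] at hx
    obtain ⟨r, hr, rfl⟩ := hx
    exact cayley_bound_one r t (habs r hr) ht.1
  -- Lipschitz bound between positive times
  have htwo : ∀ t : ℝ, ∀ ht : t ∈ Set.Ioc (0 : ℝ) 1, ∀ s : ℝ, ∀ hs : s ∈ Set.Ioc (0 : ℝ) 1,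
      ‖g ⟨t, Set.Ioc_subset_Icc_self ht⟩ - g ⟨s, Set.Ioc_subset_Icc_self hs⟩‖ ≤ 2 * |t - s| := by
    intro t ht s hs
    rw [hgt t ht, hgt s hs, ← cfc_sub _ _ a (hcont t) (hcont s)]
    refine norm_cfc_le (by positivity) fun x hx => ?_
    rw [hspecC] at hx
    obtain ⟨r, hr, rfl⟩ := hx
    exact cayley_bound_two r t s (habs r hr) ht.1 hs.1
  have hlip : LipschitzWith 2 g := by
    refine LipschitzWith.of_dist_le_mul fun p q => ?_
    obtain ⟨p, hp⟩ := p
    obtain ⟨q, hq⟩ := q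
    rw [dist_eq_norm, Subtype.dist_eq, Real.dist_eq]
    show ‖g ⟨p, hp⟩ - g ⟨q, hq⟩‖ ≤ (2 : NNReal) * |p - q|
    have h2 : ((2 : NNReal) : ℝ) = 2 := by norm_num
    rw [h2]
    rcases eq_or_lt_of_le hp.1 with hp0 | hp0 <;> rcases eq_or_lt_of_le hq.1 with hq0 | hq0
    · have hpq : (⟨p, hp⟩ : Set.Icc (0:ℝ) 1) = ⟨q, hq⟩ := Subtype.ext (show p = q by rw [← hp0, ← hq0])
      rw [hpq]
      simp
    · have hgp : g ⟨p, hp⟩ = 1 := by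
        rw [show (⟨p, hp⟩ : Set.Icc (0:ℝ) 1) = ⟨0, by norm_num⟩ from Subtype.ext hp0.symm]
        exact hg0
      have habs' : |p - q| = q := by rw [← hp0]; simp [abs_of_pos hq0]
      rw [hgp, norm_sub_rev, habs']
      exact hone q ⟨hq0, hq.2⟩
    · have hgq : g ⟨q, hq⟩ = 1 := by
        rw [show (⟨q, hq⟩ : Set.Icc (0:ℝ) 1) = ⟨0, by norm_num⟩ from Subtype.ext hq0.symm]
        exact hg0
      have habs' : |p - q| = p := by rw [← hq0]; simp [abs_of_pos hp0]
      rw [hgq, habs']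
      exact hone p ⟨hp0, hp.2⟩
    · exact htwo p ⟨hp0, hp.2⟩ q ⟨hq0, hq.2⟩
  exact hlip.continuous
end
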